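/- Under the hypotheses of the previous setting (S, S₁ vertex-cuts of sizes k and k-1, F and F₁ semifragments with G⟨S⟩ - V(F) and G⟨S⟩ - V(F̄) both k-connected): if |S(F,F₁)| ≥ k, then |S₁ ∩ V(F)| ≥ |S ∩ V(F̄₁)|, |S ∩ V(F₁)| > |S₁ ∩ V(F̄)|, and F̄ ∩ F̄₁ = ∅. -/

import Mathlib

open SimpleGraph Set

/-- `KConn G k` means the vertex connectivity of `G` is at least `k`:
removing any set of fewer than `k` vertices leaves at least two vertices
and a connected graph. -/
def KConn {V : Type*} (G : SimpleGraph V) (k : ℕ) : Prop :=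
  ∀ S : Set V, S.ncard < k → 2 ≤ Sᶜ.ncard ∧ (G.induce Sᶜ).Connected

/-- `addClique G S` is `G⟨S⟩`: the graph `G` with all edges among `S` added. -/
def addClique {V : Type*} (G : SimpleGraph V) (S : Set V) : SimpleGraph V :=
  G ⊔ SimpleGraph.fromRel (fun u v => u ∈ S ∧ v ∈ S)

/-- `IsSemifragment G S F`: `F` is a union of at least one but not all
connected components of `G - S`, i.e. `F` is a nonempty subset of `Sᶜ`,
its complement in `Sᶜ` is nonempty, and there are no edges from `F` to
the rest of `G - S`. -/
def IsSemifragment {V : Type*} (G : SimpleGraph V) (S F : Set V) : Prop :=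
  F.Nonempty ∧ (Sᶜ \ F).Nonempty ∧ F ⊆ Sᶜ ∧
    ∀ u ∈ F, ∀ w ∈ Sᶜ \ F, ¬ G.Adj u w

/-- `(G, C) ∈ 𝒦ᵇ_k(t)`: `G` is `k`-connected, `C` is a clique of order `k`,
`G - V(C)` is bipartite with every one of its vertices having degree (in `G`)
at least `k + t`, and adjacent vertices outside `C` have no common neighbor. -/
def KClassB {V : Type*} (G : SimpleGraph V) (C : Set V) (k t : ℕ) : Prop :=
  KConn G k ∧ C.ncard = k ∧ (∀ u ∈ C, ∀ v ∈ C, u ≠ v → G.Adj u v) ∧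
    (G.induce Cᶜ).Colorable 2 ∧ (∀ v ∈ Cᶜ, k + t ≤ (G.neighborSet v).ncard) ∧
    ∀ u ∈ Cᶜ, ∀ v ∈ Cᶜ, G.Adj u v → ∀ w, ¬(G.Adj u w ∧ G.Adj v w)


/-!
The two inequalities are bookkeeping: split `S` along `S₁, F₁, F̄₁` and `S₁` along `S, F, F̄`,
and compare with `k ≤ |S(F,F₁)|`. For the last claim, the second inequality shows that
`T = (S ∩ S₁) ∪ (S ∩ F̄₁) ∪ (S₁ ∩ F̄)` has fewer than `k` vertices while `S ∩ F₁ ≠ ∅`.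
In `G⟨S⟩ - V(F) - T`, every neighbour of a vertex of `F̄₁` lies in `F̄₁` (the clique edges stay
inside `S`, and `S ∩ F̄₁ ⊆ T`), so a vertex of `F̄ ∩ F̄₁` would be separated from `S ∩ F₁`,
contradicting the `k`-connectivity of `G⟨S⟩ - V(F)`.
-/

section Connectivity

variable {W : Type*} {H : SimpleGraph W} {k : ℕ}

theorem KConn.exists_adj_of_mem_of_notMem (hH : KConn H k) {T A : Set W} (hT : T.ncard < k)
    {a b : W} (ha : a ∈ A) (haT : a ∉ T) (hb : b ∉ A) (hbT : b ∉ T) :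
    ∃ u ∈ A, u ∉ T ∧ ∃ v ∉ A, v ∉ T ∧ H.Adj u v := by
  obtain ⟨-, hconn⟩ := hH T hT
  obtain ⟨p⟩ := hconn.preconnected ⟨a, haT⟩ ⟨b, hbT⟩
  obtain ⟨d, -, hd₁, hd₂⟩ := p.exists_boundary_dart (Subtype.val ⁻¹' A) ha hb
  exact ⟨d.fst, hd₁, d.fst.2, d.snd, hd₂, d.snd.2, d.adj⟩

theorem KConn.exists_adj_of_induce [Finite W] {U T A : Set W} (hH : KConn (H.induce U) k)
    (hT : T.ncard < k) {a b : W} (haU : a ∈ U) (ha : a ∈ A) (haT : a ∉ T)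
    (hbU : b ∈ U) (hb : b ∉ A) (hbT : b ∉ T) :
    ∃ u ∈ U, u ∈ A ∧ u ∉ T ∧ ∃ v ∈ U, v ∉ A ∧ v ∉ T ∧ H.Adj u v := by
  have hT' : (Subtype.val ⁻¹' T : Set U).ncard < k :=
    (ncard_le_ncard_of_injOn Subtype.val (fun _ h => h) Subtype.val_injective.injOn).trans_lt hT
  obtain ⟨u, hu, huT, v, hv, hvT, huv⟩ :=
    hH.exists_adj_of_mem_of_notMem (A := Subtype.val ⁻¹' A) hT'
      (a := ⟨a, haU⟩) (b := ⟨b, hbU⟩) ha haT hb hbT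
  exact ⟨u, u.2, hu, huT, v, v.2, hv, hvT, huv⟩

end Connectivity

theorem addClique_adj_of_notMem {V : Type*} {G : SimpleGraph V} {S : Set V} {u v : V}
    (hu : u ∉ S) (h : (addClique G S).Adj u v) : G.Adj u v := by
  rcases h with h | h
  · exact h
  · rcases h.2 with ⟨h, -⟩ | ⟨-, h⟩ <;> exact absurd h hu

namespace IsSemifragment

variable {V : Type*} {G : SimpleGraph V} {S F : Set V}

theorem disjoint (hF : IsSemifragment G S F) : Disjoint S F :=
  disjoint_left.mpr fun _ hS hF' => hF.2.2.1 hF' hS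

theorem not_adj (hF : IsSemifragment G S F) {u v : V} (hu : u ∉ S ∪ F) (hv : v ∈ F) :
    ¬ G.Adj u v := fun h =>
  hF.2.2.2 v hv u ⟨fun huS => hu (.inl huS), fun huF => hu (.inr huF)⟩ h.symm

end IsSemifragment

theorem ncard_eq_inter_add_inter_add_inter_compl {V : Type*} [Finite V] (X : Set V)
    {A B : Set V} (hAB : Disjoint A B) :
    X.ncard = (X ∩ A).ncard + (X ∩ B).ncard + (X ∩ (A ∪ B)ᶜ).ncard := by
  rw [← ncard_inter_add_ncard_sdiff_eq_ncard X (A ∪ B), inter_union_distrib_left,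
    ncard_union_eq (hAB.mono inter_subset_right inter_subset_right), sdiff_eq]

theorem ncard_union_union_le {V : Type*} (A B C : Set V) :
    (A ∪ B ∪ C).ncard ≤ A.ncard + B.ncard + C.ncard :=
  (ncard_union_le _ _).trans (Nat.add_le_add_right (ncard_union_le _ _) _)

theorem compl_union_inter_compl_union_eq_empty {V : Type*} [Finite V] {G : SimpleGraph V}
    {k : ℕ} {S S₁ F F₁ : Set V} (hSF : Disjoint S F) (hF₁ : IsSemifragment G S₁ F₁)
    (hconn : KConn ((addClique G S).induce Fᶜ) k)
    (hT : ((S ∩ S₁) ∪ (S ∩ (S₁ ∪ F₁)ᶜ) ∪ (S₁ ∩ (S ∪ F)ᶜ)).ncard < k)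
    (hSF₁ : (S ∩ F₁).Nonempty) :
    (S ∪ F)ᶜ ∩ (S₁ ∪ F₁)ᶜ = ∅ := by
  by_contra hne
  obtain ⟨x, hx, hx₁⟩ := nonempty_iff_ne_empty.mpr hne
  obtain ⟨y, hyS, hyF₁⟩ := hSF₁
  have hxS : x ∉ S := fun h => hx (.inl h)
  have hxS₁ : x ∉ S₁ := fun h => hx₁ (.inl h)
  have hyS₁ : y ∉ S₁ := fun h => hF₁.disjoint.notMem_of_mem_left h hyF₁
  obtain ⟨u, -, hu, huT, v, hvnF, hv, hvT, huv⟩ :=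
    hconn.exists_adj_of_induce hT (a := x) (b := y) (fun h => hx (.inr h)) hx₁
      (by rintro ((⟨h, -⟩ | ⟨h, -⟩) | ⟨h, -⟩) <;> contradiction)
      (hSF.notMem_of_mem_left hyS) (fun h => h (.inr hyF₁)) (by simp [hyS₁, hyF₁])
  have huS : u ∉ S := fun h => huT (.inl (.inr ⟨h, hu⟩))
  have hvF₁ : v ∈ F₁ := by
    by_contra hvF₁
    have hvS₁ : v ∈ S₁ := by simpa [hvF₁] using hv
    by_cases hvS : v ∈ S
    · exact hvT (.inl (.inl ⟨hvS, hvS₁⟩))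
    · exact hvT (.inr ⟨hvS₁, by simp [hvS, hvnF]⟩)
  exact hF₁.not_adj hu hvF₁ (addClique_adj_of_notMem huS huv)

theorem stmt9_general {V : Type*} [Fintype V] (G : SimpleGraph V) (k : ℕ) (hk : 1 ≤ k)
    (S S₁ F F₁ : Set V) (hS : S.ncard = k) (hS₁ : S₁.ncard = k - 1)
    (hF : IsSemifragment G S F) (hF₁ : IsSemifragment G S₁ F₁)
    (h1 : KConn ((addClique G S).induce Fᶜ) k)
    (hbig : k ≤ ((S₁ ∩ F) ∪ (S₁ ∩ S) ∪ (S ∩ F₁)).ncard) :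
    (S ∩ (S₁ ∪ F₁)ᶜ).ncard ≤ (S₁ ∩ F).ncard ∧
      (S₁ ∩ (S ∪ F)ᶜ).ncard < (S ∩ F₁).ncard ∧
      (S ∪ F)ᶜ ∩ (S₁ ∪ F₁)ᶜ = ∅ := by
  have hsplitS := ncard_eq_inter_add_inter_add_inter_compl S hF₁.disjoint
  have hsplitS₁ := ncard_eq_inter_add_inter_add_inter_compl S₁ hF.disjoint
  have hbig' := hbig.trans (ncard_union_union_le _ _ _)
  have hT := ncard_union_union_le (S ∩ S₁) (S ∩ (S₁ ∪ F₁)ᶜ) (S₁ ∩ (S ∪ F)ᶜ)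
  rw [inter_comm S₁ S] at hsplitS₁ hbig'
  have hlt : (S₁ ∩ (S ∪ F)ᶜ).ncard < (S ∩ F₁).ncard := by omega
  refine ⟨by omega, hlt, compl_union_inter_compl_union_eq_empty hF.disjoint hF₁ h1 (by omega) ?_⟩
  exact nonempty_of_ncard_ne_zero (by omega)

/-- Lemma 2.2(b): with S, S₁ vertex-cuts of sizes k and k-1, F, F₁
semifragments, and G⟨S⟩ - V(F), G⟨S⟩ - V(F̄) both k-connected: if
|S(F,F₁)| ≥ k then |S₁ ∩ F| ≥ |S ∩ F̄₁|, |S ∩ F₁| > |S₁ ∩ F̄| and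
F̄ ∩ F̄₁ = ∅. -/
theorem stmt9 {V : Type*} [Fintype V] (G : SimpleGraph V) (k : ℕ) (hk : 1 ≤ k)
    (S S₁ F F₁ : Set V) (hS : S.ncard = k) (hS₁ : S₁.ncard = k - 1)
    (hScut : ¬ (G.induce Sᶜ).Connected) (hS₁cut : ¬ (G.induce S₁ᶜ).Connected)
    (hF : IsSemifragment G S F) (hF₁ : IsSemifragment G S₁ F₁)
    (h1 : KConn ((addClique G S).induce Fᶜ) k)
    (h2 : KConn ((addClique G S).induce (S ∪ F)) k)
    (hbig : k ≤ ((S₁ ∩ F) ∪ (S₁ ∩ S) ∪ (S ∩ F₁)).ncard) :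
    (S ∩ (S₁ ∪ F₁)ᶜ).ncard ≤ (S₁ ∩ F).ncard ∧
      (S₁ ∩ (S ∪ F)ᶜ).ncard < (S ∩ F₁).ncard ∧
      (S ∪ F)ᶜ ∩ (S₁ ∪ F₁)ᶜ = ∅ :=
  stmt9_general G k hk S S₁ F F₁ hS hS₁ hF hF₁ h1 hbig
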